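/- arXiv:2305.09206 — 8 statements merged into one kernel-verified Lean document; each statement's English description precedes it below -/
import Mathlib

section
/- Consider two agents, one indivisible good valued 1 by both agents, and one divisible good valued a by agent 1 and b by agent 2, where b > a > 1. In any EFM allocation (where each agent, if she values the other's divisible portion positively, must not envy the other's full bundle, and otherwise must not envy after removing one indivisible good), the indivisible good must be allocated to agent 1. -/
/-- Two agents, one indivisible good valued 1 by both, one divisible good valued
`a` by agent 1 (= agent `0`) and `b` by agent 2 (= agent `1`), with `b > a > 1`.
`owner` is the agent receiving the indivisible good; agent 1 receives fraction `x`
of the divisible good and agent 2 receives `1 - x`.  Under the EFM conditions, the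
indivisible good must go to agent 1. -/
theorem efm_forces_indivisible_to_agent_one
    (a b x : ℝ) (ha : 1 < a) (hab : a < b)
    (hx0 : 0 ≤ x) (hx1 : x ≤ 1) (owner : Fin 2)
    -- agent 1's EFM condition towards agent 2: envy-freeness when agent 2's
    -- divisible share has positive value to agent 1
    (hEF1 : a * (1 - x) > 0 →
      (if owner = 0 then (1:ℝ) else 0) + a * x ≥
        (if owner = 1 then (1:ℝ) else 0) + a * (1 - x))
    -- agent 1's EF1 condition when agent 2's divisible share is worthless to her
    -- and agent 2 holds the indivisible good (remove the indivisible good)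
    (hEF1one : a * (1 - x) = 0 → owner = 1 →
      (if owner = 0 then (1:ℝ) else 0) + a * x ≥ a * (1 - x))
    -- agent 2's EFM condition towards agent 1
    (hEF2 : b * x > 0 →
      (if owner = 1 then (1:ℝ) else 0) + b * (1 - x) ≥
        (if owner = 0 then (1:ℝ) else 0) + b * x)
    (hEF2one : b * x = 0 → owner = 0 →
      (if owner = 1 then (1:ℝ) else 0) + b * (1 - x) ≥ b * x) :
    owner = 0 := by
  have hcases : owner = 0 ∨ owner = 1 := by omega
  rcases hcases with h | h
  · exact h
  · exfalso
    subst h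
    simp only [if_pos rfl, if_neg (show (1:Fin 2) ≠ 0 by decide)] at hEF1 hEF2
    norm_num at hEF1 hEF2
    by_cases hx : x = 1
    · subst hx
      have h2 := hEF2 (by nlinarith)
      nlinarith
    · have hxlt : x < 1 := lt_of_le_of_ne hx1 hx
      have h1 := hEF1 (by nlinarith)
      have hx2 : 2 * x - 1 > 0 := by nlinarith
      have h2 := hEF2 (by nlinarith)
      nlinarith [mul_lt_mul_of_pos_right hab hx2]
end

section
/- There is no function f : {(a,b) : ℝ² | b > a > 1} → ℝ with (a-1)/(2a) ≤ f(a,b) ≤ (b-1)/(2b) for all b > a > 1 such that f(a,b) ≥ f(a',b) for all a' ∈ (1,b) and f(a,b) ≤ f(a,b') for all b' ∈ (a,∞) (so that agent 2's utility b(1-f(a,b)) cannot be increased by reporting b'). -/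
/-- There is no truthful EFM mechanism for two agents, one indivisible good
(valued 1 by both) and one divisible good (valued `a` resp. `b` with `b > a > 1`):
no function `f` giving agent 1 a fraction `f a b` of the divisible good can
satisfy the EFM bounds `(a-1)/(2a) ≤ f a b ≤ (b-1)/(2b)` together with
truthfulness for agent 1 (`f a b ≥ f a' b` for all misreports `a' ∈ (1,b)`) and
for agent 2 (`f a b ≤ f a b'` for all misreports `b' ∈ (a,∞)`). -/
theorem no_truthful_efm_mechanism :
    ¬ ∃ f : ℝ → ℝ → ℝ,
      (∀ a b : ℝ, 1 < a → a < b →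
        (a - 1) / (2 * a) ≤ f a b ∧ f a b ≤ (b - 1) / (2 * b)) ∧
      (∀ a a' b : ℝ, 1 < a → a < b → 1 < a' → a' < b → f a b ≥ f a' b) ∧
      (∀ a b b' : ℝ, 1 < a → a < b → a < b' → f a b ≤ f a b') := by
  rintro ⟨f, hB, h1, h2⟩
  -- f 2 3 ≤ 1/3
  have hub : f 2 3 ≤ (3 - 1) / (2 * 3) := (hB 2 3 (by norm_num) (by norm_num)).2
  -- f 10 20 ≥ 9/20
  have hlb : (10 - 1) / (2 * 10) ≤ f 10 20 := (hB 10 20 (by norm_num) (by norm_num)).1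
  -- f 2 20 ≥ f 10 20
  have e1 : f 2 20 ≥ f 10 20 := h1 2 10 20 (by norm_num) (by norm_num) (by norm_num) (by norm_num)
  -- f 2 20 ≤ f 2 3
  have e2 : f 2 20 ≤ f 2 3 := h2 2 20 3 (by norm_num) (by norm_num) (by norm_num)
  nlinarith
end

section
/- Let A and B be two finite sequences of length n of positive reals, each sorted in ascending order. If for every k ∈ {1,...,n} the sum of the first k entries of A is at least the sum of the first k entries of B, then the product of all entries of A is at least the product of all entries of B. -/
/-- Abel summation positivity: if `c` is nonneg and nonincreasing on `[0,n)` and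
the prefix sums of `d` are nonneg, then `∑ c i * d i ≥ 0`. -/
lemma abel_nonneg : ∀ (n : ℕ) (c d : ℕ → ℝ),
    (∀ i j, i ≤ j → j < n → c j ≤ c i) →
    (∀ i, i < n → 0 ≤ c i) →
    (∀ k, k ≤ n → 0 ≤ ∑ i ∈ Finset.range k, d i) →
    0 ≤ ∑ i ∈ Finset.range n, c i * d i := by
  intro n
  induction n with
  | zero => intro c d _ _ _; simp
  | succ n ih =>
    intro c d hanti h0 hpre
    have e1 : ∀ i ∈ Finset.range (n+1), c i * d i = (c i - c n) * d i + c n * d i := by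
      intro i _; ring
    rw [Finset.sum_congr rfl e1, Finset.sum_add_distrib, ← Finset.mul_sum,
      Finset.sum_range_succ (fun i => (c i - c n) * d i)]
    simp only [sub_self, zero_mul, add_zero]
    apply add_nonneg
    · apply ih (fun i => c i - c n) d
      · intro i j hij hj
        exact sub_le_sub_right (hanti i j hij (hj.trans n.lt_succ_self)) _
      · intro i hi
        exact sub_nonneg.mpr (hanti i n hi.le n.lt_succ_self)
      · intro k hk; exact hpre k (hk.trans n.le_succ)
    · exact mul_nonneg (h0 n n.lt_succ_self) (hpre (n+1) le_rfl)

lemma range_ite_sum (g : ℕ → ℝ) (k n : ℕ) (h : k ≤ n) :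
    ∑ i ∈ Finset.range n, (if i < k then g i else 0) = ∑ i ∈ Finset.range k, g i := by
  rw [← Finset.sum_filter]
  congr 1
  ext i
  simp only [Finset.mem_filter, Finset.mem_range]
  omega

/-- If two ascending sequences of positive reals satisfy prefix-sum domination,
then the dominating sequence has at least as large a product. -/
theorem prefix_dominance_implies_product_dominance
    (n : ℕ) (A B : Fin n → ℝ)
    (hApos : ∀ i, 0 < A i) (hBpos : ∀ i, 0 < B i)
    (hAmono : Monotone A) (hBmono : Monotone B)
    (hdom : ∀ k : ℕ, k ≤ n →
      ∑ i ∈ Finset.univ.filter (fun i : Fin n => (i : ℕ) < k), A i ≥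
      ∑ i ∈ Finset.univ.filter (fun i : Fin n => (i : ℕ) < k), B i) :
    ∏ i, A i ≥ ∏ i, B i := by
  set a : ℕ → ℝ := fun i => if h : i < n then A ⟨i, h⟩ else 1 with ha_def
  set b : ℕ → ℝ := fun i => if h : i < n then B ⟨i, h⟩ else 1 with hb_def
  have ha : ∀ (i : Fin n), a (i : ℕ) = A i := by
    intro i; simp only [ha_def, dif_pos i.isLt]
  have hb : ∀ (i : Fin n), b (i : ℕ) = B i := by
    intro i; simp only [hb_def, dif_pos i.isLt]
  have hapos : ∀ i, i < n → 0 < a i := by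
    intro i hi; simpa [ha_def, dif_pos hi] using hApos ⟨i, hi⟩
  have hbpos : ∀ i, i < n → 0 < b i := by
    intro i hi; simpa [hb_def, dif_pos hi] using hBpos ⟨i, hi⟩
  -- prefix sums over range
  have prefA : ∀ k, k ≤ n →
      ∑ i ∈ Finset.univ.filter (fun i : Fin n => (i : ℕ) < k), A i
        = ∑ i ∈ Finset.range k, a i := by
    intro k hk
    rw [Finset.sum_filter]
    have := Fin.sum_univ_eq_sum_range (fun i => if i < k then a i else 0) n
    rw [show (∑ i : Fin n, if (i : ℕ) < k then A i else 0)
        = ∑ i : Fin n, (fun j => if j < k then a j else 0) (i : ℕ) by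
      apply Finset.sum_congr rfl; intro i _; simp [ha i]]
    rw [this, range_ite_sum a k n hk]
  have prefB : ∀ k, k ≤ n →
      ∑ i ∈ Finset.univ.filter (fun i : Fin n => (i : ℕ) < k), B i
        = ∑ i ∈ Finset.range k, b i := by
    intro k hk
    rw [Finset.sum_filter]
    have := Fin.sum_univ_eq_sum_range (fun i => if i < k then b i else 0) n
    rw [show (∑ i : Fin n, if (i : ℕ) < k then B i else 0)
        = ∑ i : Fin n, (fun j => if j < k then b j else 0) (i : ℕ) by
      apply Finset.sum_congr rfl; intro i _; simp [hb i]]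
    rw [this, range_ite_sum b k n hk]
  -- Abel summation with c = a⁻¹, d = a - b
  have habel : 0 ≤ ∑ i ∈ Finset.range n, (a i)⁻¹ * (a i - b i) := by
    apply abel_nonneg n (fun i => (a i)⁻¹) (fun i => a i - b i)
    · intro i j hij hj
      have hi : i < n := lt_of_le_of_lt hij hj
      apply inv_anti₀ (hapos i hi)
      have : A ⟨i, hi⟩ ≤ A ⟨j, hj⟩ := hAmono (by exact hij)
      simpa [ha_def, dif_pos hi, dif_pos hj] using this
    · intro i hi; exact (inv_pos.mpr (hapos i hi)).le
    · intro k hk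
      have := hdom k hk
      rw [prefA k hk, prefB k hk] at this
      rw [Finset.sum_sub_distrib]
      linarith
  -- pointwise log inequality
  have hpt : ∀ i ∈ Finset.range n,
      (a i)⁻¹ * (a i - b i) ≤ Real.log (a i) - Real.log (b i) := by
    intro i hi
    rw [Finset.mem_range] at hi
    have hai := hapos i hi
    have hbi := hbpos i hi
    have h1 : Real.log (b i / a i) ≤ b i / a i - 1 :=
      Real.log_le_sub_one_of_pos (div_pos hbi hai)
    rw [Real.log_div hbi.ne' hai.ne'] at h1
    have h2 : (a i)⁻¹ * (a i - b i) = 1 - b i / a i := by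
      field_simp
    linarith
  have hsum : ∑ i ∈ Finset.range n, Real.log (b i)
      ≤ ∑ i ∈ Finset.range n, Real.log (a i) := by
    have := Finset.sum_le_sum hpt
    rw [Finset.sum_sub_distrib] at this
    linarith
  -- convert products to exp of sums
  have hprodA : ∏ i, A i = Real.exp (∑ i ∈ Finset.range n, Real.log (a i)) := by
    rw [Real.exp_sum]
    rw [← Fin.prod_univ_eq_prod_range (fun i => Real.exp (Real.log (a i))) n]
    apply Finset.prod_congr rfl
    intro i _
    rw [ha i, Real.exp_log (hApos i)]
  have hprodB : ∏ i, B i = Real.exp (∑ i ∈ Finset.range n, Real.log (b i)) := by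
    rw [Real.exp_sum]
    rw [← Fin.prod_univ_eq_prod_range (fun i => Real.exp (Real.log (b i))) n]
    apply Finset.prod_congr rfl
    intro i _
    rw [hb i, Real.exp_log (hBpos i)]
  rw [hprodA, hprodB]
  exact Real.exp_le_exp.mpr hsum
end

section
/- In a Nash-welfare-maximizing allocation of indivisible goods under binary additive valuations with free disposal (every allocated good has value 1 to at least one agent), every agent values each good in her own bundle at 1; hence v_i(G_i) = |G_i| for every agent i. -/
/-- In an MNW allocation of indivisible goods under binary valuations with free
disposal, every agent values each good in her own bundle at 1, hence
`v_i(G_i) = |G_i|`. -/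
theorem mnw_binary_nonwasteful
    (n m : ℕ) (v : Fin n → Fin m → ℝ)
    (hbin : ∀ i g, v i g = 0 ∨ v i g = 1)
    (hfree : ∀ g, ∃ i, v i g = 1)
    (A : Fin n → Finset (Fin m)) (hpart : ∀ g, ∃! i, g ∈ A i)
    -- A is MNW: among all partitions it first maximizes the number of agents
    -- with positive utility, then the product of positive utilities
    (hMNW : ∀ B : Fin n → Finset (Fin m), (∀ g, ∃! i, g ∈ B i) →
      (Finset.univ.filter (fun i => 0 < ∑ g ∈ B i, v i g)).card ≤
        (Finset.univ.filter (fun i => 0 < ∑ g ∈ A i, v i g)).card ∧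
      ((Finset.univ.filter (fun i => 0 < ∑ g ∈ B i, v i g)).card =
          (Finset.univ.filter (fun i => 0 < ∑ g ∈ A i, v i g)).card →
        ∏ i ∈ Finset.univ.filter (fun i => 0 < ∑ g ∈ B i, v i g), ∑ g ∈ B i, v i g ≤
        ∏ i ∈ Finset.univ.filter (fun i => 0 < ∑ g ∈ A i, v i g), ∑ g ∈ A i, v i g)) :
    (∀ i, ∀ g ∈ A i, v i g = 1) ∧ ∀ i, (∑ g ∈ A i, v i g) = ((A i).card : ℝ) := by
  classical
  have hnonneg : ∀ k (S : Finset (Fin m)), (0:ℝ) ≤ ∑ h ∈ S, v k h := by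
    intro k S
    refine Finset.sum_nonneg fun h _ => ?_
    rcases hbin k h with h' | h' <;> simp [h']
  have hmain : ∀ i, ∀ g ∈ A i, v i g = 1 := by
    intro i g hg
    by_contra hne
    have hv0 : v i g = 0 := (hbin i g).resolve_right hne
    obtain ⟨j, hj⟩ := hfree g
    have hij : j ≠ i := by rintro rfl; exact hne hj
    set B : Fin n → Finset (Fin m) := fun k =>
      if k = i then (A i).erase g else if k = j then insert g (A j) else A k with hB
    have hgAk : ∀ k, k ≠ i → g ∉ A k := by
      intro k hk hgk
      obtain ⟨w, hw, huniq⟩ := hpart g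
      exact hk ((huniq k hgk).trans (huniq i hg).symm)
    have hBi : B i = (A i).erase g := if_pos rfl
    have hBj : B j = insert g (A j) := by simp [hB, hij]
    have hBo : ∀ k, k ≠ i → k ≠ j → B k = A k := by
      intro k h1 h2; simp [hB, h1, h2]
    have hBpart : ∀ h, ∃! k, h ∈ B k := by
      intro h
      rcases eq_or_ne h g with rfl | hhg
      · refine ⟨j, by simp [hBj], ?_⟩
        intro k hk
        by_cases h1 : k = i
        · subst h1; rw [hBi] at hk; exact absurd hk (Finset.notMem_erase _ _)
        · by_cases h2 : k = j
          · exact h2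
          · rw [hBo k h1 h2] at hk; exact absurd hk (hgAk k h1)
      · obtain ⟨w, hw, huniq⟩ := hpart h
        refine ⟨w, ?_, ?_⟩
        · by_cases h1 : w = i
          · subst h1; rw [hBi]; exact Finset.mem_erase.mpr ⟨hhg, hw⟩
          · by_cases h2 : w = j
            · subst h2; rw [hBj]; exact Finset.mem_insert_of_mem hw
            · show h ∈ B w; rw [hBo w h1 h2]; exact hw
        · intro k hk
          apply huniq
          by_cases h1 : k = i
          · subst h1; rw [hBi] at hk; exact Finset.mem_of_mem_erase hk
          · by_cases h2 : k = j
            · subst h2; rw [hBj] at hk; exact (Finset.mem_insert.mp hk).resolve_left hhg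
            · rwa [hBo k h1 h2] at hk
    have hsum_i : ∑ h ∈ B i, v i h = ∑ h ∈ A i, v i h := by
      rw [hBi, Finset.sum_erase_eq_sub hg, hv0, sub_zero]
    have hgAj : g ∉ A j := hgAk j hij
    have hsum_j : ∑ h ∈ B j, v j h = 1 + ∑ h ∈ A j, v j h := by
      rw [hBj, Finset.sum_insert hgAj, hj]
    have hsum_eq : ∀ k, k ≠ j → ∑ h ∈ B k, v k h = ∑ h ∈ A k, v k h := by
      intro k hk
      by_cases hki : k = i
      · subst hki; exact hsum_i
      · rw [hBo k hki hk]
    have hjposB : 0 < ∑ h ∈ B j, v j h := by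
      have := hnonneg j (A j); rw [hsum_j]; linarith
    obtain ⟨hcard, hprod⟩ := hMNW B hBpart
    by_cases hjA : 0 < ∑ h ∈ A j, v j h
    · -- the filter sets coincide
      have hsets : Finset.univ.filter (fun k => 0 < ∑ h ∈ B k, v k h) =
          Finset.univ.filter (fun k => 0 < ∑ h ∈ A k, v k h) := by
        ext k
        simp only [Finset.mem_filter, Finset.mem_univ, true_and]
        by_cases hk : k = j
        · subst hk; exact ⟨fun _ => hjA, fun _ => hjposB⟩
        · rw [hsum_eq k hk]
      have hjmem : j ∈ Finset.univ.filter (fun k => 0 < ∑ h ∈ A k, v k h) := by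
        simp [hjA]
      have hle := hprod (by rw [hsets])
      rw [hsets] at hle
      rw [← Finset.mul_prod_erase _ _ hjmem, ← Finset.mul_prod_erase _ _ hjmem] at hle
      have hprod_eq : ∏ k ∈ (Finset.univ.filter (fun k => 0 < ∑ h ∈ A k, v k h)).erase j,
          ∑ h ∈ B k, v k h =
          ∏ k ∈ (Finset.univ.filter (fun k => 0 < ∑ h ∈ A k, v k h)).erase j,
          ∑ h ∈ A k, v k h := by
        refine Finset.prod_congr rfl fun k hk => ?_
        exact hsum_eq k (Finset.ne_of_mem_erase hk)
      rw [hprod_eq] at hle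
      have hprodpos : 0 < ∏ k ∈ (Finset.univ.filter (fun k => 0 < ∑ h ∈ A k, v k h)).erase j,
          ∑ h ∈ A k, v k h := by
        refine Finset.prod_pos fun k hk => ?_
        exact (Finset.mem_filter.mp (Finset.mem_of_mem_erase hk)).2
      rw [hsum_j] at hle
      nlinarith [hnonneg j (A j)]
    · -- B has strictly more positive agents
      have hsub : Finset.univ.filter (fun k => 0 < ∑ h ∈ A k, v k h) ⊂
          Finset.univ.filter (fun k => 0 < ∑ h ∈ B k, v k h) := by
        constructor
        · intro k hk
          simp only [Finset.mem_filter, Finset.mem_univ, true_and] at hk ⊢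
          by_cases hkj : k = j
          · subst hkj; exact hjposB
          · rwa [hsum_eq k hkj]
        · intro hcon
          have := hcon (by simp [hjposB] : j ∈ _)
          simp only [Finset.mem_filter, Finset.mem_univ, true_and] at this
          exact hjA this
      exact absurd hcard (not_le.mpr (Finset.card_lt_card hsub))
  refine ⟨hmain, fun i => ?_⟩
  rw [Finset.sum_congr rfl (hmain i), Finset.sum_const, nsmul_eq_mul, mul_one]
end

section
/- For water-filling over a fixed total amount: let h, h' be water levels and ℓ, ℓ' the numbers of agents receiving water in two water-filling allocations built on base utilities (a_i) and (b_i) respectively (sorted ascending), so that ℓ·h = u + ∑_{i=1}^{ℓ} a_i with a_i ≤ h for i ≤ ℓ and a_i ≥ h for i > ℓ, and similarly ℓ'·h' = u + ∑_{i=1}^{ℓ'} b_i with b_i ≤ h' for i ≤ ℓ' and b_i ≥ h' for i > ℓ'. If for all k, ∑_{i=1}^{k} a_i ≥ ∑_{i=1}^{k} b_i (Lorenz domination of bases), then h ≥ h'. -/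
lemma water_sum_step (n k : ℕ) (hk : k < n) (f : Fin n → ℝ) :
    ∑ i ∈ Finset.univ.filter (fun i : Fin n => (i : ℕ) < k + 1), f i
    = (∑ i ∈ Finset.univ.filter (fun i : Fin n => (i : ℕ) < k), f i) + f ⟨k, hk⟩ := by
  have h : Finset.univ.filter (fun i : Fin n => (i : ℕ) < k + 1)
      = insert ⟨k, hk⟩ (Finset.univ.filter (fun i : Fin n => (i : ℕ) < k)) := by
    ext i
    simp [Nat.lt_succ_iff_lt_or_eq, Fin.ext_iff, or_comm]
    omega
  rw [h, Finset.sum_insert (by simp), add_comm]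

/-- Lorenz domination of base utilities implies a higher water level.
`a b : Fin n → ℝ` are nondecreasing nonnegative base utilities; `h, ℓ` (resp.
`h', ℓ'`) describe the water-filling completion over total water `u`. -/
theorem lorenz_dominance_implies_higher_water_level
    (n : ℕ) (a b : Fin n → ℝ) (u h h' : ℝ) (ℓ ℓ' : ℕ)
    (hu : 0 < u)
    (ha_mono : Monotone a) (hb_mono : Monotone b)
    (ha_nonneg : ∀ i, 0 ≤ a i) (hb_nonneg : ∀ i, 0 ≤ b i)
    (hℓ1 : 1 ≤ ℓ) (hℓn : ℓ ≤ n) (hℓ'1 : 1 ≤ ℓ') (hℓ'n : ℓ' ≤ n)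
    (ha_le : ∀ i : Fin n, (i : ℕ) < ℓ → a i ≤ h)
    (ha_ge : ∀ i : Fin n, ℓ ≤ (i : ℕ) → h ≤ a i)
    (ha_level : (ℓ : ℝ) * h = u + ∑ i ∈ Finset.univ.filter (fun i : Fin n => (i : ℕ) < ℓ), a i)
    (hb_le : ∀ i : Fin n, (i : ℕ) < ℓ' → b i ≤ h')
    (hb_ge : ∀ i : Fin n, ℓ' ≤ (i : ℕ) → h' ≤ b i)
    (hb_level : (ℓ' : ℝ) * h' = u + ∑ i ∈ Finset.univ.filter (fun i : Fin n => (i : ℕ) < ℓ'), b i)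
    (hdom : ∀ k : ℕ, k ≤ n →
      ∑ i ∈ Finset.univ.filter (fun i : Fin n => (i : ℕ) < k), a i ≥
      ∑ i ∈ Finset.univ.filter (fun i : Fin n => (i : ℕ) < k), b i) :
    h ≥ h' := by
  set S : ℕ → ℝ := fun k => ∑ i ∈ Finset.univ.filter (fun i : Fin n => (i : ℕ) < k), b i with hS
  -- downward: for k ≤ ℓ', (k:ℝ)*h' ≤ u + S k
  have down : ∀ k : ℕ, k ≤ ℓ' → (k : ℝ) * h' ≤ u + S k := by
    intro k hk
    induction' hd : ℓ' - k with d ih generalizing k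
    · have : k = ℓ' := le_antisymm hk (Nat.le_of_sub_eq_zero hd)
      subst this
      rw [← hb_level]
    · have hklt : k < ℓ' := by omega
      have hkn : k < n := lt_of_lt_of_le hklt hℓ'n
      have ihk : ((k + 1 : ℕ) : ℝ) * h' ≤ u + S (k + 1) :=
        ih (k + 1) hklt (by omega)
      have hstep : S (k + 1) = S k + b ⟨k, hkn⟩ := water_sum_step n k hkn b
      have hble : b ⟨k, hkn⟩ ≤ h' := hb_le ⟨k, hkn⟩ (by simp only [Fin.val_mk]; omega)
      push_cast at ihk ⊢
      nlinarith [ihk, hstep, hble]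
  -- upward: for ℓ' ≤ k ≤ n, (k:ℝ)*h' ≤ u + S k
  have up : ∀ k : ℕ, ℓ' ≤ k → k ≤ n → (k : ℝ) * h' ≤ u + S k := by
    intro k hk hkn
    induction' hd : k - ℓ' with d ih generalizing k
    · have : k = ℓ' := by omega
      subst this
      rw [← hb_level]
    · have hklt : ℓ' < k := by omega
      have hk1 : k - 1 < n := by omega
      have ihk : ((k - 1 : ℕ) : ℝ) * h' ≤ u + S (k - 1) :=
        ih (k - 1) (by omega) (by omega) (by omega)
      have hstep : S (k - 1 + 1) = S (k - 1) + b ⟨k - 1, hk1⟩ := water_sum_step n (k - 1) hk1 b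
      have hbge : h' ≤ b ⟨k - 1, hk1⟩ := hb_ge ⟨k - 1, hk1⟩ (by simp only [Fin.val_mk]; omega)
      have hk' : k - 1 + 1 = k := by omega
      rw [hk'] at hstep
      have : ((k - 1 : ℕ) : ℝ) = (k : ℝ) - 1 := by
        push_cast [Nat.cast_sub (by omega : 1 ≤ k)]; ring
      rw [this] at ihk
      nlinarith [ihk, hstep, hbge]
  have key : (ℓ : ℝ) * h' ≤ u + S ℓ := by
    rcases le_or_gt ℓ ℓ' with hle | hlt
    · exact down ℓ hle
    · exact up ℓ hlt.le hℓn
  have hdomℓ := hdom ℓ hℓn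
  have : (ℓ : ℝ) * h' ≤ (ℓ : ℝ) * h := by
    calc (ℓ : ℝ) * h' ≤ u + S ℓ := key
      _ ≤ u + ∑ i ∈ Finset.univ.filter (fun i : Fin n => (i : ℕ) < ℓ), a i := by
          simp only [hS]; linarith [hdomℓ]
      _ = (ℓ : ℝ) * h := ha_level.symm
  have hℓpos : (0 : ℝ) < (ℓ : ℝ) := by exact_mod_cast Nat.lt_of_lt_of_le Nat.zero_lt_one hℓ1
  exact le_of_mul_le_mul_left this hℓpos
end

section
/- Splitting the single divisible good equally among the minimum-utility agents yields EFM≥0: suppose (G_1,...,G_n) is an EF1 allocation of indivisible goods with binary valuations such that each agent values every good in her own bundle at 1, and there is one divisible good valued in {0,1} by each agent. Let T = argmin_i v_i(G_i) and give each agent in T a fraction 1/|T| of the divisible good. Then the resulting allocation is EFM≥0. -/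
/-- Splitting the single divisible good equally among the minimum-utility agents
of an EF1, non-wasteful base allocation (binary valuations) yields EFM≥0. -/
theorem equal_split_among_minimizers_is_efm_ge_zero
    (n m : ℕ)
    (vG : Fin n → Fin m → ℝ) (vd : Fin n → ℝ)
    (hbinG : ∀ i g, vG i g = 0 ∨ vG i g = 1)
    (hbind : ∀ i, vd i = 0 ∨ vd i = 1)
    (G : Fin n → Finset (Fin m))
    (hown : ∀ i, ∀ g ∈ G i, vG i g = 1)
    (hEF1 : ∀ i j : Fin n, (G j).Nonempty →
      ∃ g ∈ G j, (∑ g' ∈ G i, vG i g') ≥ (∑ g' ∈ (G j).erase g, vG i g'))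
    (T : Finset (Fin n))
    (hT : T = Finset.univ.filter
      (fun i => ∀ j, (∑ g ∈ G i, vG i g) ≤ (∑ g ∈ G j, vG j g)))
    (x : Fin n → ℝ)
    (hx : ∀ i, x i = if i ∈ T then 1 / (T.card : ℝ) else 0) :
    -- EFM≥0 of the resulting allocation ((G_i, x_i))_i
    ∀ i j : Fin n,
      (x j = 0 ∧ (G j).Nonempty →
        ∃ g ∈ G j,
          (∑ g' ∈ G i, vG i g') + x i * vd i ≥
          (∑ g' ∈ (G j).erase g, vG i g') + x j * vd i) ∧
      (¬ (x j = 0 ∧ (G j).Nonempty) →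
        (∑ g' ∈ G i, vG i g') + x i * vd i ≥
        (∑ g' ∈ G j, vG i g') + x j * vd i) := by
  have hu : ∀ k, (∑ g ∈ G k, vG k g) = ((G k).card : ℝ) := by
    intro k
    rw [Finset.sum_congr rfl (fun g hg => hown k g hg), Finset.sum_const,
      nsmul_eq_mul, mul_one]
  have hvd0 : ∀ k, 0 ≤ vd k := fun k => by rcases hbind k with h | h <;> simp [h]
  have hvd1 : ∀ k, vd k ≤ 1 := fun k => by rcases hbind k with h | h <;> simp [h]
  have hx0 : ∀ k, 0 ≤ x k := by
    intro k; rw [hx]; split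
    · positivity
    · exact le_refl 0
  have hcross : ∀ a b : Fin n, (∑ g ∈ G b, vG a g) ≤ ((G b).card : ℝ) := by
    intro a b
    calc (∑ g ∈ G b, vG a g) ≤ ∑ _g ∈ G b, (1:ℝ) := by
          apply Finset.sum_le_sum; intro g _; rcases hbinG a g with h|h <;> simp [h]
      _ = ((G b).card : ℝ) := by simp
  have hcross0 : ∀ a b : Fin n, 0 ≤ (∑ g ∈ G b, vG a g) := by
    intro a b
    apply Finset.sum_nonneg; intro g _; rcases hbinG a g with h|h <;> simp [h]
  intro i j
  constructor
  · rintro ⟨hxj, hne⟩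
    obtain ⟨g, hg, hge⟩ := hEF1 i j hne
    refine ⟨g, hg, ?_⟩
    rw [hxj, zero_mul]
    have := mul_nonneg (hx0 i) (hvd0 i)
    linarith
  · intro hnot
    by_cases hxj : x j = 0
    · have hje : G j = ∅ := by
        rcases not_and_or.mp hnot with h | h
        · exact absurd hxj h
        · exact Finset.not_nonempty_iff_eq_empty.mp h
      rw [hje, Finset.sum_empty, hxj, zero_mul]
      have h1 := mul_nonneg (hx0 i) (hvd0 i)
      have h2 := hcross0 i i
      linarith
    · have hjT : j ∈ T := by
        by_contra h
        rw [hx j, if_neg h] at hxj; exact hxj rfl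
      have hjmin : ∀ k, (∑ g ∈ G j, vG j g) ≤ (∑ g ∈ G k, vG k g) := by
        rw [hT] at hjT; exact (Finset.mem_filter.mp hjT).2
      have hTpos : 0 < T.card := Finset.card_pos.mpr ⟨j, hjT⟩
      have hxjval : x j = 1 / (T.card : ℝ) := by rw [hx, if_pos hjT]
      have hxj1 : x j ≤ 1 := by
        rw [hxjval, div_le_one (by exact_mod_cast hTpos)]
        exact_mod_cast hTpos
      by_cases hiT : i ∈ T
      · have himin : ∀ k, (∑ g ∈ G i, vG i g) ≤ (∑ g ∈ G k, vG k g) := by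
          rw [hT] at hiT; exact (Finset.mem_filter.mp hiT).2
        have hxieq : x i = x j := by rw [hx, if_pos hiT, hxjval]
        have h1 := hjmin i
        have h3 := hcross i j
        have h4 := hu j
        rw [hxieq]
        linarith
      · have hk : ∃ k, ¬ (∑ g ∈ G i, vG i g) ≤ (∑ g ∈ G k, vG k g) := by
          by_contra h
          push_neg at h
          exact hiT (by rw [hT]; exact Finset.mem_filter.mpr ⟨Finset.mem_univ i, h⟩)
        obtain ⟨k, hk⟩ := hk
        have hlt : ((G j).card : ℝ) < ((G i).card : ℝ) := by
          rw [← hu i, ← hu j]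
          exact lt_of_le_of_lt (hjmin k) (not_le.mp hk)
        have hltn : (G j).card < (G i).card := by exact_mod_cast hlt
        have hsucc : ((G j).card : ℝ) + 1 ≤ ((G i).card : ℝ) := by
          exact_mod_cast Nat.succ_le_of_lt hltn
        have h1 : x j * vd i ≤ x j := by
          nlinarith [hx0 j, hvd1 i, hvd0 i]
        have h2 := mul_nonneg (hx0 i) (hvd0 i)
        have h3 := hcross i j
        have h4 := hu i
        linarith
end

section
/- In the instance with 4 agents and goods g_1..g_5, d_1 where agent 1 values only g_2, g_4 (at 1 each), agent 2 values g_1, g_2, g_5, d_1, and agents 3, 4 value everything, every MNW allocation gives agent 1 both g_2 and g_4, and gives agent 2 utility exactly 4/3. In particular, 2·(4/3)³ > 1·(5/3)³. -/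
namespace MNWInstance

/-- Valuations of the four agents over the five indivisible goods
`g_1,…,g_5` (agent 1 is index `0`, good `g_k` is index `k-1`). -/
def v : Fin 4 → Fin 5 → ℝ :=
  ![![0, 1, 0, 1, 0], ![1, 1, 0, 0, 1], ![1, 1, 1, 1, 1], ![1, 1, 1, 1, 1]]

/-- Valuations of the four agents over the divisible good `d_1`. -/
def vd : Fin 4 → ℝ := ![0, 1, 1, 1]

/-- Utility of agent `i` in the allocation `(G, x)`:  `G i` are the indivisible
goods and `x i` the fraction of the divisible good received by `i`. -/
def util (G : Fin 4 → Finset (Fin 5)) (x : Fin 4 → ℝ) (i : Fin 4) : ℝ :=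
  (∑ g ∈ G i, v i g) + x i * vd i

/-- A valid mixed allocation: the indivisible goods are partitioned and the
divisible good is fully fractionally allocated. -/
def Valid (G : Fin 4 → Finset (Fin 5)) (x : Fin 4 → ℝ) : Prop :=
  (∀ g, ∃! i, g ∈ G i) ∧ (∀ i, 0 ≤ x i) ∧ ∑ i, x i = 1

/-- Number of agents with positive utility. -/
noncomputable def posCount (G : Fin 4 → Finset (Fin 5)) (x : Fin 4 → ℝ) : ℕ :=
  (Finset.univ.filter (fun i => 0 < util G x i)).card

/-- Nash welfare: product of the positive utilities. -/
noncomputable def nash (G : Fin 4 → Finset (Fin 5)) (x : Fin 4 → ℝ) : ℝ :=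
  ∏ i ∈ Finset.univ.filter (fun i => 0 < util G x i), util G x i

/-- `(G, x)` is a Maximum Nash Welfare allocation. -/
def IsMNW (G : Fin 4 → Finset (Fin 5)) (x : Fin 4 → ℝ) : Prop :=
  Valid G x ∧ ∀ G' x', Valid G' x' →
    posCount G' x' ≤ posCount G x ∧
    (posCount G' x' = posCount G x → nash G' x' ≤ nash G x)

/-! ### Auxiliary lemmas -/

lemma v_le_one (i : Fin 4) (g : Fin 5) : v i g ≤ 1 := by
  fin_cases i <;> fin_cases g <;> norm_num [v]

lemma v_nonneg (i : Fin 4) (g : Fin 5) : 0 ≤ v i g := by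
  fin_cases i <;> fin_cases g <;> norm_num [v]

lemma vd_le_one : ∀ i : Fin 4, vd i ≤ 1 := fun i =>
  match i with
  | 0 => by rw [show vd 0 = 0 from rfl]; norm_num
  | 1 => by rw [show vd 1 = 1 from rfl]
  | 2 => by rw [show vd 2 = 1 from rfl]
  | 3 => by rw [show vd 3 = 1 from rfl]

lemma partition_sum (G : Fin 4 → Finset (Fin 5)) (hG : ∀ g, ∃! i, g ∈ G i)
    (c : Fin 5 → ℝ) : ∑ i, ∑ g ∈ G i, c g = ∑ g, c g := by
  have h : ∀ i, ∑ g ∈ G i, c g = ∑ g, if g ∈ G i then c g else 0 := by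
    intro i; rw [Finset.sum_ite_mem, Finset.univ_inter]
  simp_rw [h]
  rw [Finset.sum_comm]
  refine Finset.sum_congr rfl fun g _ => ?_
  obtain ⟨i0, hi0, huniq⟩ := hG g
  rw [Finset.sum_eq_single i0]
  · simp [hi0]
  · intro j _ hj
    rw [if_neg]; intro h; exact hj (huniq j h)
  · simp

lemma util0_eq (G : Fin 4 → Finset (Fin 5)) (x : Fin 4 → ℝ) :
    util G x 0 = (if (1:Fin 5) ∈ G 0 then (1:ℝ) else 0) +
      (if (3:Fin 5) ∈ G 0 then (1:ℝ) else 0) := by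
  have hv0 : ∀ g : Fin 5, v 0 g =
      (if g = 1 then (1:ℝ) else 0) + (if g = 3 then (1:ℝ) else 0) := by
    intro g
    fin_cases g <;> norm_num [v, Fin.ext_iff, show ((3:Fin 5):ℕ) = 3 from rfl,
      show ((1:Fin 5):ℕ) = 1 from rfl]
  simp only [util, vd]
  norm_num
  rw [Finset.sum_congr rfl (fun g _ => hv0 g), Finset.sum_add_distrib,
    Finset.sum_ite_eq' (G 0) (1:Fin 5) (fun _ => (1:ℝ)),
    Finset.sum_ite_eq' (G 0) (3:Fin 5) (fun _ => (1:ℝ))]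

/-! ### The candidate allocation -/

def Gc : Fin 4 → Finset (Fin 5) := ![{1,3},{0},{2},{4}]
noncomputable def xc : Fin 4 → ℝ := ![0,1/3,1/3,1/3]

lemma valid_c : Valid Gc xc := by
  refine ⟨?_, ?_, ?_⟩
  · intro g
    fin_cases g
    · exact ⟨1, by decide, by decide⟩
    · exact ⟨0, by decide, by decide⟩
    · exact ⟨2, by decide, by decide⟩
    · exact ⟨0, by decide, by decide⟩
    · exact ⟨3, by decide, by decide⟩
  · intro i; fin_cases i <;> norm_num [xc]
  · simp [Fin.sum_univ_four, xc]; norm_num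

lemma util_c0 : util Gc xc 0 = 2 := by
  simp only [util]
  rw [show Gc 0 = {1,3} from rfl, Finset.sum_pair (by decide : (1:Fin 5) ≠ 3),
      show xc 0 = 0 from rfl, show v 0 1 = 1 from rfl, show v 0 3 = 1 from rfl,
      show vd 0 = 0 from rfl]
  norm_num

lemma util_c1 : util Gc xc 1 = 4/3 := by
  simp only [util]
  rw [show Gc 1 = {0} from rfl, Finset.sum_singleton, show xc 1 = 1/3 from rfl,
      show v 1 0 = 1 from rfl, show vd 1 = 1 from rfl]
  norm_num

lemma util_c2 : util Gc xc 2 = 4/3 := by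
  simp only [util]
  rw [show Gc 2 = {2} from rfl, Finset.sum_singleton, show xc 2 = 1/3 from rfl,
      show v 2 2 = 1 from rfl, show vd 2 = 1 from rfl]
  norm_num

lemma util_c3 : util Gc xc 3 = 4/3 := by
  simp only [util]
  rw [show Gc 3 = {4} from rfl, Finset.sum_singleton, show xc 3 = 1/3 from rfl,
      show v 3 4 = 1 from rfl, show vd 3 = 1 from rfl]
  norm_num

lemma util_c_pos : ∀ i, 0 < util Gc xc i := fun i =>
  match i with
  | 0 => by rw [util_c0]; norm_num
  | 1 => by rw [util_c1]; norm_num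
  | 2 => by rw [util_c2]; norm_num
  | 3 => by rw [util_c3]; norm_num

lemma filter_c : (Finset.univ.filter (fun i => 0 < util Gc xc i)) = Finset.univ :=
  Finset.filter_true_of_mem fun i _ => util_c_pos i

lemma posCount_c : posCount Gc xc = 4 := by
  rw [posCount, filter_c]; rfl

lemma nash_c : nash Gc xc = 128/27 := by
  rw [nash, filter_c, Fin.prod_univ_four, util_c0, util_c1, util_c2, util_c3]
  norm_num

/-! ### Main theorem -/

set_option maxHeartbeats 2000000 in
/-- In this instance, every MNW allocation gives agent 1 both `g_2` and `g_4`
and gives agent 2 utility exactly `4/3`; in particular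
`2·(4/3)³ > 1·(5/3)³`. -/
theorem mnw_gives_agent_one_both_goods :
    (∀ G x, IsMNW G x →
      (1 : Fin 5) ∈ G 0 ∧ (3 : Fin 5) ∈ G 0 ∧ util G x 1 = 4 / 3) ∧
    2 * (4 / 3 : ℝ) ^ 3 > 1 * (5 / 3 : ℝ) ^ 3 := by
  constructor
  · intro G x hM
    obtain ⟨⟨hpart, hxnn, hxsum⟩, hopt⟩ := hM
    -- posCount is exactly 4
    have hle4 : posCount G x ≤ 4 := by
      rw [posCount]
      calc (Finset.univ.filter (fun i => 0 < util G x i)).card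
          ≤ (Finset.univ : Finset (Fin 4)).card := Finset.card_filter_le _ _
        _ = 4 := by simp
    have h4 : posCount G x = 4 :=
      le_antisymm hle4 (posCount_c ▸ (hopt Gc xc valid_c).1)
    have hnash : 128/27 ≤ nash G x :=
      nash_c ▸ (hopt Gc xc valid_c).2 (by rw [posCount_c, h4])
    have hfilt : Finset.univ.filter (fun i => 0 < util G x i) = Finset.univ := by
      apply Finset.eq_univ_of_card
      rw [← posCount, h4]; simp
    have hpos : ∀ i, 0 < util G x i := by
      intro i
      have : i ∈ Finset.univ.filter (fun i => 0 < util G x i) := by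
        rw [hfilt]; exact Finset.mem_univ i
      exact (Finset.mem_filter.mp this).2
    have hnash_eq : nash G x =
        util G x 0 * util G x 1 * util G x 2 * util G x 3 := by
      rw [nash, hfilt, Fin.prod_univ_four]
    -- total number of goods
    have hcard : ((G 0).card : ℝ) + (G 1).card + (G 2).card + (G 3).card = 5 := by
      have h := partition_sum G hpart (fun _ => (1:ℝ))
      simpa [Fin.sum_univ_four, Finset.sum_const] using h
    -- utility upper bounds
    have hub : ∀ i, util G x i ≤ (G i).card + x i := by
      intro i
      have h1 : ∑ g ∈ G i, v i g ≤ ((G i).card : ℝ) := by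
        calc ∑ g ∈ G i, v i g ≤ ∑ _g ∈ G i, (1:ℝ) :=
              Finset.sum_le_sum fun g _ => v_le_one i g
          _ = (G i).card := by simp
      have h2 : x i * vd i ≤ x i := by
        calc x i * vd i ≤ x i * 1 := mul_le_mul_of_nonneg_left (vd_le_one i) (hxnn i)
          _ = x i := mul_one _
      calc util G x i = (∑ g ∈ G i, v i g) + x i * vd i := rfl
        _ ≤ (G i).card + x i := add_le_add h1 h2
    have hxsum4 : x 0 + x 1 + x 2 + x 3 = 1 := by
      rw [← hxsum, Fin.sum_univ_four]
    set u1 := util G x 1 with hu1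
    set u2 := util G x 2 with hu2
    set u3 := util G x 3 with hu3
    have h1p : 0 < u1 := hpos 1
    have h2p : 0 < u2 := hpos 2
    have h3p : 0 < u3 := hpos 3
    by_cases h1 : (1:Fin 5) ∈ G 0
    · by_cases h3 : (3:Fin 5) ∈ G 0
      · -- agent 0 gets both goods
        refine ⟨h1, h3, ?_⟩
        have hu0 : util G x 0 = 2 := by
          rw [util0_eq, if_pos h1, if_pos h3]; norm_num
        have hc0 : (2:ℝ) ≤ (G 0).card := by
          have hsub : ({1,3} : Finset (Fin 5)) ⊆ G 0 := by
            rw [Finset.insert_subset_iff, Finset.singleton_subset_iff]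
            exact ⟨h1, h3⟩
          have := Finset.card_le_card hsub
          rw [show ({1,3} : Finset (Fin 5)).card = 2 from rfl] at this
          exact_mod_cast this
        have hs : u1 + u2 + u3 ≤ 4 := by
          have b1 := hub 1; have b2 := hub 2; have b3 := hub 3
          have hx0 := hxnn 0
          linarith
        have hprod : 64/27 ≤ u1 * u2 * u3 := by
          rw [hnash_eq, hu0] at hnash
          nlinarith
        -- AM-GM style argument forcing u1 = 4/3
        have e1 : 4 * (u1 * u2 * u3) ≤ u1 * (4 - u1)^2 := by
          nlinarith [mul_nonneg h1p.le (sq_nonneg (u2 - u3)),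
            mul_nonneg (mul_nonneg h1p.le (by linarith : (0:ℝ) ≤ 4 - u1 - u2 - u3))
              (by linarith : (0:ℝ) ≤ 4 - u1 + u2 + u3)]
        have key : (u1 - 4/3)^2 * (16/3 - u1) ≤ 0 := by nlinarith
        have h163 : 0 < 16/3 - u1 := by linarith
        have hsq : (u1 - 4/3)^2 = 0 := by
          refine le_antisymm ?_ (sq_nonneg _)
          by_contra hcon
          push_neg at hcon
          nlinarith [mul_pos hcon h163]
        have := pow_eq_zero_iff (n := 2) (by norm_num) |>.mp hsq
        have : u1 = 4/3 := by linarith [sub_eq_zero.mp this]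
        exact this
      · -- contradiction: agent 0 has only g2
        exfalso
        have hu0 : util G x 0 = 1 := by
          rw [util0_eq, if_pos h1, if_neg h3]; norm_num
        have hc0 : (1:ℝ) ≤ (G 0).card := by
          have : 0 < (G 0).card := Finset.card_pos.mpr ⟨1, h1⟩
          exact_mod_cast this
        have hs : u1 + u2 + u3 ≤ 5 := by
          have b1 := hub 1; have b2 := hub 2; have b3 := hub 3
          have hx0 := hxnn 0
          linarith
        have e1 : 4 * (u1 * u2 * u3) ≤ u1 * (5 - u1)^2 := by
          nlinarith [mul_nonneg h1p.le (sq_nonneg (u2 - u3)),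
            mul_nonneg (mul_nonneg h1p.le (by linarith : (0:ℝ) ≤ 5 - u1 - u2 - u3))
              (by linarith : (0:ℝ) ≤ 5 - u1 + u2 + u3)]
        have e2 : u1 * u2 * u3 ≤ 125/27 := by
          nlinarith [mul_nonneg (sq_nonneg (u1 - 5/3)) (by linarith : (0:ℝ) ≤ 20/3 - u1)]
        rw [hnash_eq, hu0] at hnash
        nlinarith
    · by_cases h3 : (3:Fin 5) ∈ G 0
      · -- contradiction: agent 0 has only g4
        exfalso
        have hu0 : util G x 0 = 1 := by
          rw [util0_eq, if_neg h1, if_pos h3]; norm_num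
        have hc0 : (1:ℝ) ≤ (G 0).card := by
          have : 0 < (G 0).card := Finset.card_pos.mpr ⟨3, h3⟩
          exact_mod_cast this
        have hs : u1 + u2 + u3 ≤ 5 := by
          have b1 := hub 1; have b2 := hub 2; have b3 := hub 3
          have hx0 := hxnn 0
          linarith
        have e1 : 4 * (u1 * u2 * u3) ≤ u1 * (5 - u1)^2 := by
          nlinarith [mul_nonneg h1p.le (sq_nonneg (u2 - u3)),
            mul_nonneg (mul_nonneg h1p.le (by linarith : (0:ℝ) ≤ 5 - u1 - u2 - u3))
              (by linarith : (0:ℝ) ≤ 5 - u1 + u2 + u3)]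
        have e2 : u1 * u2 * u3 ≤ 125/27 := by
          nlinarith [mul_nonneg (sq_nonneg (u1 - 5/3)) (by linarith : (0:ℝ) ≤ 20/3 - u1)]
        rw [hnash_eq, hu0] at hnash
        nlinarith
      · -- contradiction: agent 0 has utility 0
        exfalso
        have hu0 : util G x 0 = 0 := by
          rw [util0_eq, if_neg h1, if_neg h3]; norm_num
        exact absurd hu0 (ne_of_gt (hpos 0))
  · norm_num

end MNWInstance
end

section
/- Suppose an allocation ((G_1,x_1),...,(G_n,x_n)) of indivisible goods plus a single identically-valued divisible good fails the water-filling property: either there exist agents i, j with x_i > 0, x_j > 0 and v_i(G_i) + u·x_i > v_j(G_j) + u·x_j, or there exist i, j with x_i = 0, x_j > 0 and v_i(G_i) < v_j(G_j) + u·x_j. Then the allocation is not leximin: there is another allocation of the divisible good (same G_i's) whose utility vector leximin-dominates it. -/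
/-- If an allocation of indivisible goods (base utilities `base i = v_i(G_i)`)
plus a single identically-valued divisible good (value `u`, shares `x`) violates
the water-filling property, then it is not leximin: some other allocation `y` of
the divisible good (with the same indivisible bundles) has a utility vector
whose ascending sorted version is lexicographically greater. -/
theorem water_filling_violation_not_leximin
    (n : ℕ) (base : Fin n → ℝ) (u : ℝ) (hu : 0 < u)
    (x : Fin n → ℝ) (hx : ∀ i, 0 ≤ x i) (hxsum : ∑ i, x i = 1)
    (hviol :
      (∃ i j : Fin n, 0 < x i ∧ 0 < x j ∧
        base i + u * x i > base j + u * x j) ∨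
      (∃ i j : Fin n, x i = 0 ∧ 0 < x j ∧
        base i < base j + u * x j)) :
    ∃ y : Fin n → ℝ, (∀ i, 0 ≤ y i) ∧ (∑ i, y i = 1) ∧
      ∃ k : Fin n,
        (∀ i : Fin n, i < k →
          (fun i => base i + u * y i) (Tuple.sort (fun i => base i + u * y i) i) =
          (fun i => base i + u * x i) (Tuple.sort (fun i => base i + u * x i) i)) ∧
        (fun i => base i + u * x i) (Tuple.sort (fun i => base i + u * x i) k) <
        (fun i => base i + u * y i) (Tuple.sort (fun i => base i + u * y i) k) := by
  classical
  set f : Fin n → ℝ := fun i => base i + u * x i with hfdef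
  clear_value f
  -- Get an agent `a` with positive share whose utility is strictly above some other utility.
  obtain ⟨a, ha, w, hw⟩ : ∃ a, 0 < x a ∧ ∃ w, f w < f a := by
    rcases hviol with ⟨i, j, hi, hj, hij⟩ | ⟨i, j, hi0, hj, hij⟩
    · refine ⟨i, hi, j, ?_⟩
      simp only [hfdef]
      exact hij
    · refine ⟨j, hj, i, ?_⟩
      simp only [hfdef, hi0, mul_zero, add_zero]
      exact hij
  -- minimum utility m, attained at b
  obtain ⟨m, b, hmb, hbmin, hba⟩ :
      ∃ (m : ℝ) (b : Fin n), m = f b ∧ (∀ i, m ≤ f i) ∧ m < f a := by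
    obtain ⟨b, -, hb⟩ := Finset.exists_min_image Finset.univ f ⟨a, Finset.mem_univ a⟩
    have hbmin : ∀ i, f b ≤ f i := fun i => hb i (Finset.mem_univ i)
    exact ⟨f b, b, rfl, hbmin, lt_of_le_of_lt (hbmin w) hw⟩
  set A := Finset.univ.filter (fun i => f i = m) with hA
  clear_value A
  have hbA : b ∈ A := by simp [hA, hmb.symm]
  have hcpos : 0 < A.card := Finset.card_pos.mpr ⟨b, hbA⟩
  -- an opaque real equal to the cardinality of the argmin set
  obtain ⟨cc, hcc, hccpos⟩ : ∃ cc : ℝ, cc = (A.card : ℝ) ∧ 0 < cc :=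
    ⟨_, rfl, by exact_mod_cast hcpos⟩
  have haA : f a ≠ m := ne_of_gt hba
  -- an opaque small transfer amount ε
  obtain ⟨ε, hε0, hcε, hucε⟩ :
      ∃ ε : ℝ, 0 < ε ∧ cc * ε ≤ x a ∧ u * (cc * ε) < f a - m := by
    refine ⟨min (x a / cc) ((f a - m) / (2 * u * cc)), ?_, ?_, ?_⟩
    · exact lt_min (div_pos ha hccpos) (div_pos (by linarith) (by positivity))
    · have h1 : min (x a / cc) ((f a - m) / (2 * u * cc)) ≤ x a / cc := min_le_left _ _
      have h2 := mul_le_mul_of_nonneg_left h1 hccpos.le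
      have h3 : cc * (x a / cc) = x a := by field_simp
      linarith
    · have h1 : min (x a / cc) ((f a - m) / (2 * u * cc)) ≤ (f a - m) / (2 * u * cc) :=
        min_le_right _ _
      have h2 := mul_le_mul_of_nonneg_left (mul_le_mul_of_nonneg_left h1 hccpos.le) hu.le
      have h3 : u * (cc * ((f a - m) / (2 * u * cc))) = (f a - m) / 2 := by
        field_simp
      rw [h3] at h2
      linarith
  set y : Fin n → ℝ := fun i =>
    x i + (if i = a then -(cc * ε) else 0) + (if f i = m then ε else 0) with hydef
  clear_value y
  -- value facts about y
  have hya : y a = x a - cc * ε := by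
    rw [hydef]
    show x a + (if a = a then -(cc * ε) else 0) + (if f a = m then ε else 0) = _
    rw [if_pos rfl, if_neg haA]
    ring
  have hyA : ∀ i, i ≠ a → f i = m → y i = x i + ε := by
    intro i h1 h2
    rw [hydef]
    show x i + (if i = a then -(cc * ε) else 0) + (if f i = m then ε else 0) = _
    rw [if_neg h1, if_pos h2]
    ring
  have hyo : ∀ i, i ≠ a → f i ≠ m → y i = x i := by
    intro i h1 h2
    rw [hydef]
    show x i + (if i = a then -(cc * ε) else 0) + (if f i = m then ε else 0) = _
    rw [if_neg h1, if_neg h2]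
    ring
  have hfa : f a = base a + u * x a := by rw [hfdef]
  -- every new utility is strictly above m
  have hkey : ∀ i, m < base i + u * y i := by
    intro i
    by_cases hia : i = a
    · subst hia
      rw [hya]
      have hexp : base i + u * (x i - cc * ε) = f i - u * (cc * ε) := by
        rw [hfa]; ring
      rw [hexp]
      linarith
    · by_cases him : f i = m
      · rw [hyA i hia him]
        have hexp : base i + u * (x i + ε) = f i + u * ε := by
          simp only [hfdef]; ring
        rw [hexp, him]
        nlinarith
      · rw [hyo i hia him]
        have hfi : f i = base i + u * x i := by rw [hfdef]
        rw [← hfi]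
        exact lt_of_le_of_ne (hbmin i) (Ne.symm him)
  refine ⟨y, ?_, ?_, ⟨0, a.pos⟩, ?_, ?_⟩
  · -- nonnegativity
    intro i
    by_cases hia : i = a
    · subst hia
      rw [hya]
      linarith
    · by_cases him : f i = m
      · rw [hyA i hia him]
        have := hx i; linarith
      · rw [hyo i hia him]
        exact hx i
  · -- sum is 1
    have h1 : ∑ i, (if i = a then -(cc * ε) else 0) = -(cc * ε) := by
      rw [Finset.sum_ite_eq' Finset.univ a fun _ => -(cc * ε)]
      simp
    have h2 : ∑ i, (if f i = m then ε else 0) = cc * ε := by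
      rw [← Finset.sum_filter, Finset.sum_const, nsmul_eq_mul, ← hA, ← hcc]
    simp only [hydef]
    rw [Finset.sum_add_distrib, Finset.sum_add_distrib, hxsum, h1, h2]
    ring
  · -- prefix condition is vacuous at k = 0
    intro i hi
    exact absurd hi (by simp [Fin.lt_def])
  · -- strict improvement at position 0
    set g : Fin n → ℝ := fun i => base i + u * y i with hgdef
    clear_value g
    have hmono := Tuple.monotone_sort f
    have hle : (f ∘ Tuple.sort f) ⟨0, a.pos⟩ ≤ (f ∘ Tuple.sort f) ((Tuple.sort f)⁻¹ b) :=
      hmono (Fin.mk_le_of_le_val (Nat.zero_le _))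
    have heqb : (f ∘ Tuple.sort f) ((Tuple.sort f)⁻¹ b) = f b := by
      simp [Function.comp, Equiv.Perm.inv_def]
    have hle' : f (Tuple.sort f ⟨0, a.pos⟩) ≤ m := by
      rw [heqb, ← hmb] at hle
      exact hle
    have hgt : m < g (Tuple.sort g ⟨0, a.pos⟩) := by
      have hgi : g (Tuple.sort g ⟨0, a.pos⟩) =
          base (Tuple.sort g ⟨0, a.pos⟩) + u * y (Tuple.sort g ⟨0, a.pos⟩) := by rw [hgdef]
      rw [hgi]
      exact hkey _
    calc f (Tuple.sort f ⟨0, a.pos⟩) ≤ m := hle'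
      _ < g (Tuple.sort g ⟨0, a.pos⟩) := hgt
end
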